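/- Let G be a 2-connected series-parallel multigraph built from an initial edge uv by series and parallel operations, let t be a piece of an edge e = ab in the construction (i.e., t was created by subdividing e or one of its descendants), and let s be a vertex that is neither a piece nor an endpoint of e. Then {a, b} is an st-separator of G: every path from s to t in G contains a or b. -/

import Mathlib

/-! Well-formedness makes the two parts of every composition meet only in their terminals.
Hence, along the chain of subterms from `T` down to `T'`, the pieces of `T'` stay away from
every other part, so an edge of `G` at a piece of `e` is an edge of `T'`: the vertices of `T'`
are left only through `a` or `b`, and a walk from `s ∉ T'.verts` to `t` must enter there. -/

/-- `S` is an `st`-separator in `G`. -/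
def IsSep {V : Type*} (G : SimpleGraph V) (s t : V) (S : Set V) : Prop :=
  s ∉ S ∧ t ∉ S ∧ ∀ p : G.Walk s t, ∃ w ∈ S, w ∈ p.support

/-- Construction terms for two-terminal series-parallel (multi)graphs:
a single edge, a series composition through a middle vertex (covering edge
subdivision), or a parallel composition (edge duplication). -/
inductive SPT (V : Type*) : V → V → Type _
  | edge (a b : V) : SPT V a b
  | series (a m b : V) : SPT V a m → SPT V m b → SPT V a b
  | parallel (a b : V) : SPT V a b → SPT V a b → SPT V a b

namespace SPT

variable {V : Type*}

/-- Vertices of a series-parallel term. -/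
def verts : ∀ {a b : V}, SPT V a b → Set V
  | a, b, .edge _ _ => {a, b}
  | _, _, .series _ _ _ t₁ t₂ => t₁.verts ∪ t₂.verts
  | _, _, .parallel _ _ t₁ t₂ => t₁.verts ∪ t₂.verts

/-- Edges of a series-parallel term. -/
def edges : ∀ {a b : V}, SPT V a b → Set (Sym2 V)
  | a, b, .edge _ _ => {s(a, b)}
  | _, _, .series _ _ _ t₁ t₂ => t₁.edges ∪ t₂.edges
  | _, _, .parallel _ _ t₁ t₂ => t₁.edges ∪ t₂.edges

/-- Well-formedness: the vertices created inside the two parts of a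
composition are fresh, i.e. the parts only share the prescribed terminals. -/
def WF : ∀ {a b : V}, SPT V a b → Prop
  | a, b, .edge _ _ => a ≠ b
  | _, _, .series _ m _ t₁ t₂ =>
      t₁.WF ∧ t₂.WF ∧ t₁.verts ∩ t₂.verts = {m}
  | a, b, .parallel _ _ t₁ t₂ =>
      t₁.WF ∧ t₂.WF ∧ t₁.verts ∩ t₂.verts = {a, b}

/-- `Sub t t'`: `t` is the subterm of `t'` that replaced some edge of the
construction (so the internal vertices of `t` are exactly the pieces of that
edge). -/
inductive Sub : ∀ {a b c d : V}, SPT V a b → SPT V c d → Prop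
  | refl {a b : V} (t : SPT V a b) : Sub t t
  | seriesLeft {a b c m d : V} {t : SPT V a b} {t₁ : SPT V c m} {t₂ : SPT V m d} :
      Sub t t₁ → Sub t (SPT.series c m d t₁ t₂)
  | seriesRight {a b c m d : V} {t : SPT V a b} {t₁ : SPT V c m} {t₂ : SPT V m d} :
      Sub t t₂ → Sub t (SPT.series c m d t₁ t₂)
  | parallelLeft {a b c d : V} {t : SPT V a b} {t₁ t₂ : SPT V c d} :
      Sub t t₁ → Sub t (SPT.parallel c d t₁ t₂)
  | parallelRight {a b c d : V} {t : SPT V a b} {t₁ t₂ : SPT V c d} :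
      Sub t t₂ → Sub t (SPT.parallel c d t₁ t₂)

end SPT

theorem SimpleGraph.Walk.exists_mem_support_of_neighborSet_subset {V : Type*}
    {G : SimpleGraph V} {S B : Set V} (hS : ∀ x ∈ S \ B, G.neighborSet x ⊆ S)
    {s t : V} (p : G.Walk s t) (hs : s ∉ S) (ht : t ∈ S) :
    ∃ w ∈ B, w ∈ p.support := by
  obtain ⟨d, hd, hfst, hsnd⟩ := p.reverse.exists_boundary_dart S ht hs
  have hB : d.fst ∈ B := by
    by_contra hB
    exact hsnd (hS d.fst ⟨hfst, hB⟩ d.adj)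
  refine ⟨d.fst, hB, ?_⟩
  simpa using p.reverse.dart_fst_mem_support_of_mem_darts hd

namespace SPT

variable {V : Type*}

def pieces {a b : V} (t : SPT V a b) : Set V := t.verts \ {a, b}

lemma left_mem_verts : ∀ {a b : V} (t : SPT V a b), a ∈ t.verts
  | _, _, .edge _ _ => Or.inl rfl
  | _, _, .series _ _ _ t₁ _ => Or.inl (left_mem_verts t₁)
  | _, _, .parallel _ _ t₁ _ => Or.inl (left_mem_verts t₁)

lemma right_mem_verts : ∀ {a b : V} (t : SPT V a b), b ∈ t.verts
  | _, _, .edge _ _ => Or.inr rfl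
  | _, _, .series _ _ _ _ t₂ => Or.inr (right_mem_verts t₂)
  | _, _, .parallel _ _ t₁ _ => Or.inl (right_mem_verts t₁)

lemma mem_verts_of_mem_edges {x : V} {e : Sym2 V} (hx : x ∈ e) :
    ∀ {a b : V} {t : SPT V a b}, e ∈ t.edges → x ∈ t.verts
  | _, _, .edge _ _, he => by
      rw [edges, Set.mem_singleton_iff] at he
      subst he
      simpa [verts] using hx
  | _, _, .series _ _ _ _ _, he | _, _, .parallel _ _ _ _, he =>
      he.imp (mem_verts_of_mem_edges hx) (mem_verts_of_mem_edges hx)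

namespace Sub

variable {a b c d : V} {t : SPT V a b} {t' : SPT V c d}

lemma verts_subset (h : Sub t t') : t.verts ⊆ t'.verts := by
  induction h with
  | refl => exact subset_rfl
  | seriesLeft _ ih | parallelLeft _ ih => exact ih.trans Set.subset_union_left
  | seriesRight _ ih | parallelRight _ ih => exact ih.trans Set.subset_union_right

lemma pieces_subset (h : Sub t t') (hWF : t'.WF) : t.pieces ⊆ t'.pieces := by
  induction h with
  | refl => exact subset_rfl
  | @seriesLeft c m d _ t₁ t₂ _ ih =>
      intro x hx
      obtain ⟨hx₁, hxc, hxm⟩ : x ∈ t₁.verts ∧ x ≠ c ∧ x ≠ m := by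
        simpa [pieces] using ih hWF.1 hx
      have hxd : x ≠ d := by
        rintro rfl
        have : x ∈ t₁.verts ∩ t₂.verts := ⟨hx₁, right_mem_verts t₂⟩
        exact hxm (by rwa [hWF.2.2] at this)
      exact ⟨Or.inl hx₁, by simp [hxc, hxd]⟩
  | @seriesRight c m d _ t₁ t₂ _ ih =>
      intro x hx
      obtain ⟨hx₂, hxm, hxd⟩ : x ∈ t₂.verts ∧ x ≠ m ∧ x ≠ d := by
        simpa [pieces] using ih hWF.2.1 hx
      have hxc : x ≠ c := by
        rintro rfl
        have : x ∈ t₁.verts ∩ t₂.verts := ⟨left_mem_verts t₁, hx₂⟩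
        exact hxm (by rwa [hWF.2.2] at this)
      exact ⟨Or.inr hx₂, by simp [hxc, hxd]⟩
  | parallelLeft _ ih => exact fun x hx => ⟨Or.inl (ih hWF.1 hx).1, (ih hWF.1 hx).2⟩
  | parallelRight _ ih => exact fun x hx => ⟨Or.inr (ih hWF.2.1 hx).1, (ih hWF.2.1 hx).2⟩

lemma mem_edges_of_mem_pieces (h : Sub t t') (hWF : t'.WF) {x : V} {e : Sym2 V}
    (he : e ∈ t'.edges) (hxe : x ∈ e) (hx : x ∈ t.pieces) : e ∈ t.edges := by
  induction h with
  | refl => exact he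
  | @seriesLeft _ m _ _ _ _ hs ih =>
      refine he.elim (ih hWF.1 · hx) fun he => absurd (?_ : x ∈ ({m} : Set V)) ?_
      · exact hWF.2.2 ▸ ⟨hs.verts_subset hx.1, mem_verts_of_mem_edges hxe he⟩
      · exact fun hm => (hs.pieces_subset hWF.1 hx).2 (Or.inr hm)
  | @seriesRight _ m _ _ _ _ hs ih =>
      refine he.elim (fun he => absurd (?_ : x ∈ ({m} : Set V)) ?_) (ih hWF.2.1 · hx)
      · exact hWF.2.2 ▸ ⟨mem_verts_of_mem_edges hxe he, hs.verts_subset hx.1⟩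
      · exact fun hm => (hs.pieces_subset hWF.2.1 hx).2 (Or.inl hm)
  | @parallelLeft c d _ _ _ hs ih =>
      refine he.elim (ih hWF.1 · hx) fun he => absurd (?_ : x ∈ ({c, d} : Set V)) ?_
      · exact hWF.2.2 ▸ ⟨hs.verts_subset hx.1, mem_verts_of_mem_edges hxe he⟩
      · exact (hs.pieces_subset hWF.1 hx).2
  | @parallelRight c d _ _ _ hs ih =>
      refine he.elim (fun he => absurd (?_ : x ∈ ({c, d} : Set V)) ?_) (ih hWF.2.1 · hx)
      · exact hWF.2.2 ▸ ⟨mem_verts_of_mem_edges hxe he, hs.verts_subset hx.1⟩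
      · exact (hs.pieces_subset hWF.2.1 hx).2

lemma neighborSet_subset (h : Sub t t') (hWF : t'.WF) {x : V} (hx : x ∈ t.pieces) :
    (SimpleGraph.fromEdgeSet t'.edges).neighborSet x ⊆ t.verts := fun y hy =>
  mem_verts_of_mem_edges (Sym2.mem_mk_right x y)
    (h.mem_edges_of_mem_pieces hWF ((SimpleGraph.fromEdgeSet_adj _).1 hy).1
      (Sym2.mem_mk_left x y) hx)

end Sub

end SPT

/-- Let `G` be the 2-connected series-parallel graph built (from an edge `uv`)
by a term `T`, let `T'` be the subterm with terminals `a, b` corresponding to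
an edge `e = ab` of the construction, let `t` be a piece of `e` (an internal
vertex of `T'`) and `s` a vertex that is neither a piece nor an endpoint of
`e`.  Then `{a, b}` is an `st`-separator of `G`. -/
theorem stmt12 {V : Type*} (u v a b : V) (T : SPT V u v) (hWF : T.WF)
    (T' : SPT V a b) (hsub : SPT.Sub T' T)
    (s t : V) (ht : t ∈ T'.verts) (hta : t ≠ a) (htb : t ≠ b)
    (hs : s ∉ T'.verts) (hsa : s ≠ a) (hsb : s ≠ b) :
    IsSep (SimpleGraph.fromEdgeSet T.edges) s t {a, b} := by
  refine ⟨by simp [hsa, hsb], by simp [hta, htb], fun p => ?_⟩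
  exact p.exists_mem_support_of_neighborSet_subset
    (fun x hx => hsub.neighborSet_subset hWF hx) hs ht
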